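/- Let P(x) = R(x) - q with R monic of degree n ≥ 2, R(0) = 0, and suppose all roots of R are simple. Then the polynomial U(x) = D(R(x))/(R'(x))^2 satisfies U(0) ≠ 0, where D(q) = disc_x(P(x)). -/

import Mathlib

open Polynomial

/-- The Sylvester matrix of `f` (of degree at most `m`) and `g` (of degree at most `n`). -/
noncomputable def sylvester {R : Type*} [CommRing R] (m n : ℕ) (f g : R[X]) :
    Matrix (Fin (m + n)) (Fin (m + n)) R :=
  Matrix.of fun i j =>
    if (i : ℕ) < n then
      (if (i : ℕ) ≤ (j : ℕ) ∧ (j : ℕ) ≤ (i : ℕ) + m then f.coeff (m + i - j) else 0)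
    else
      (if (i : ℕ) - n ≤ (j : ℕ) ∧ (j : ℕ) ≤ (i : ℕ) then g.coeff ((i : ℕ) - (j : ℕ)) else 0)

/-- The resultant of `f` (degree `m`) and `g` (degree `n`). -/
noncomputable def resultant {R : Type*} [CommRing R] (m n : ℕ) (f g : R[X]) : R :=
  (sylvester m n f g).det

/-- The discriminant of a monic polynomial `f` of degree `n`. -/
noncomputable def discMonic {R : Type*} [CommRing R] (n : ℕ) (f : R[X]) : R :=
  (-1 : R) ^ (n * (n - 1) / 2) * resultant n (n - 1) f (derivative f)

/-!
Evaluating `D(R(x)) = R'(x)^2 U(x)` at `x = 0` and using `R(0) = 0` gives `D(0) = R'(0)^2 U(0)`.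
Specialising `q = 0` commutes with forming the discriminant, so `D(0)` is, up to sign, the
resultant of `R` and `R'`, which is nonzero because simple roots make `R` coprime to `R'`.
-/

section Resultant

variable {R : Type*} [CommRing R]

theorem sylvester_eq_submatrix_transpose (m n : ℕ) (f g : R[X]) :
    _root_.sylvester m n f g =
      (Polynomial.sylvester f g m n).transpose.submatrix Fin.revPerm Fin.revPerm := by
  ext i j
  have hi := i.isLt
  have hj := j.isLt
  induction h : Fin.rev i using Fin.addCases <;>
  · have hk := congrArg Fin.val h
    simp only [Fin.val_rev, Fin.val_castAdd, Fin.val_natAdd] at hk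
    simp only [_root_.sylvester, Polynomial.sylvester, Matrix.of_apply, Matrix.submatrix_apply,
      Matrix.transpose_apply, Fin.revPerm_apply, h, Fin.addCases_left, Fin.addCases_right,
      Set.mem_Icc, Fin.val_rev]
    split_ifs <;> first | rfl | omega | (congr 1; omega)

theorem resultant_eq_polynomial_resultant (m n : ℕ) (f g : R[X]) :
    _root_.resultant m n f g = Polynomial.resultant f g m n := by
  rw [_root_.resultant, sylvester_eq_submatrix_transpose, Matrix.det_submatrix_equiv_self,
    Matrix.det_transpose, Polynomial.resultant]

theorem discMonic_map {S : Type*} [CommRing S] (φ : R →+* S) (n : ℕ) (f : R[X]) :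
    discMonic n (f.map φ) = φ (discMonic n f) := by
  simp only [discMonic, resultant_eq_polynomial_resultant, derivative_map, resultant_map_map,
    map_mul, map_pow, map_neg, map_one]

theorem eval_discMonic_map_C_sub_X (n : ℕ) (f : R[X]) (q : R) :
    (discMonic n (f.map C - C X)).eval q = discMonic n (f - C q) := by
  rw [← coe_evalRingHom, ← discMonic_map, Polynomial.map_sub, Polynomial.map_map, map_C,
    coe_evalRingHom, eval_X]
  have hC : (evalRingHom q).comp C = RingHom.id R := RingHom.ext fun _ => eval_C
  rw [hC, Polynomial.map_id]

theorem discMonic_natDegree_ne_zero_of_separable [IsDomain R] {f : R[X]} (hf : f.Separable) :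
    discMonic f.natDegree f ≠ 0 := by
  -- `f'` may have degree below `f.natDegree - 1` (in positive characteristic); padding only scales the
  -- resultant by a power of the leading coefficient.
  obtain ⟨k, hk⟩ := Nat.exists_eq_add_of_le (natDegree_derivative_le f)
  rw [discMonic, resultant_eq_polynomial_resultant, hk, resultant_add_right_deg _ _ _ _ _ le_rfl,
    coeff_natDegree]
  exact mul_ne_zero (pow_ne_zero _ (neg_ne_zero.mpr one_ne_zero))
    (mul_ne_zero (pow_ne_zero _ (leadingCoeff_ne_zero.mpr hf.ne_zero)) (resultant_ne_zero _ _ hf))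

end Resultant

theorem stmt1_general (n : ℕ) (R : ℝ[X]) (hmonic : R.Monic) (hdeg : R.natDegree = n)
    (h0 : R.eval 0 = 0)
    (hsimple : (R.map (algebraMap ℝ ℂ)).roots.Nodup)
    (D : ℝ[X]) (hD : D = discMonic n (R.map (C : ℝ →+* ℝ[X]) - C X))
    (U : ℝ[X]) (hU : D.comp R = (derivative R) ^ 2 * U) :
    U.eval 0 ≠ 0 := by
  have hsep : R.Separable :=
    (nodup_aroots_iff_of_splits hmonic.ne_zero (IsAlgClosed.splits _)).mp hsimple
  have hD0 : D.eval 0 ≠ 0 := by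
    rw [hD, eval_discMonic_map_C_sub_X, C_0, sub_zero, ← hdeg]
    exact discMonic_natDegree_ne_zero_of_separable hsep
  intro hU0
  apply hD0
  simpa [h0, hU0] using congrArg (eval 0) hU

/-- if moreover all (complex) roots of `R` are simple, then the polynomial
`U(x) = D(R(x))/(R'(x))^2` satisfies `U(0) ≠ 0`. -/
theorem stmt1 (n : ℕ) (hn : 2 ≤ n) (R : ℝ[X]) (hmonic : R.Monic) (hdeg : R.natDegree = n)
    (h0 : R.eval 0 = 0)
    (hsimple : (R.map (algebraMap ℝ ℂ)).roots.Nodup)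
    (D : ℝ[X]) (hD : D = discMonic n (R.map (C : ℝ →+* ℝ[X]) - C X))
    (U : ℝ[X]) (hU : D.comp R = (derivative R) ^ 2 * U) :
    U.eval 0 ≠ 0 :=
  stmt1_general n R hmonic hdeg h0 hsimple D hD U hU
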